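/- arXiv:1001.4283 — 4 statements merged into one kernel-verified Lean document; each statement's English description precedes it below -/
import Mathlib

section
/- The map Φ^B: Q_n → P^B_{2n+1} is monotone: if (ρ;σ) ≤ (μ;ν) in the interleaved dominance order on bipartitions of n, then Φ^B(ρ;σ) ≤ Φ^B(μ;ν) in the dominance order on partitions of 2n+1. -/
open Finset

/-- Partial sum of the first `k` terms of a sequence of naturals. -/
def psum (π : ℕ → ℕ) (k : ℕ) : ℕ := ∑ i ∈ Finset.range k, π i

/-- A composition of `n`: almost all terms zero, summing to `n`. -/
def IsComposition (n : ℕ) (π : ℕ → ℕ) : Prop :=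
  ∃ N, (∀ i, N ≤ i → π i = 0) ∧ psum π N = n

/-- Dominance order: `l` dominates `π`. -/
def Dominates (l π : ℕ → ℕ) : Prop := ∀ k, psum π k ≤ psum l k

/-- A partition: weakly decreasing sequence. -/
def IsPartition (π : ℕ → ℕ) : Prop := ∀ i, π (i + 1) ≤ π i

/-- A quasi-partition: `π i ≥ π (i+2)` for all `i`. -/
def IsQuasiPartition (π : ℕ → ℕ) : Prop := ∀ i, π (i + 2) ≤ π i

/-- Interleaving of two sequences: `(ρ₁, σ₁, ρ₂, σ₂, …)` (0-indexed). -/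
def interleave (ρ σ : ℕ → ℕ) (i : ℕ) : ℕ :=
  if i % 2 = 0 then ρ (i / 2) else σ (i / 2)

/-- A bipartition of `n`: a pair of partitions whose interleaving sums to `n`. -/
def IsBipartition (n : ℕ) (ρ σ : ℕ → ℕ) : Prop :=
  IsPartition ρ ∧ IsPartition σ ∧ IsComposition n (interleave ρ σ)

/-- Interleaved dominance order on bipartitions: `(ρ;σ) ≤ (μ;ν)`. -/
def BiLE (ρ σ μ ν : ℕ → ℕ) : Prop :=
  Dominates (interleave μ ν) (interleave ρ σ)

/-- The map `Φ^C` on sequences: replace a consecutive pair `2s < 2t`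
by `s+t, s+t` (pointwise description; replacements never overlap for
quasi-partitions). -/
def phiC (π : ℕ → ℕ) : ℕ → ℕ
  | 0 => if π 0 < π 1 then (π 0 + π 1) / 2 else π 0
  | (j + 1) =>
      if π (j + 1) < π (j + 2) then (π (j + 1) + π (j + 2)) / 2
      else if π j < π (j + 1) then (π j + π (j + 1)) / 2
      else π (j + 1)

/-- `Φ^C` of a bipartition: apply `phiC` to the doubled interleaving. -/
def PhiC (ρ σ : ℕ → ℕ) : ℕ → ℕ := phiC (fun i => 2 * interleave ρ σ i)

/-- Membership in `P^C_{2n}`: partition of `2n` with every odd part of even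
multiplicity. -/
def IsPC (n : ℕ) (l : ℕ → ℕ) : Prop :=
  IsPartition l ∧ IsComposition (2 * n) l ∧
    ∀ a : ℕ, Odd a → Even ({i | l i = a}.ncard)

/-- C-distinguished: `μ i ≥ ν i - 1` and `ν i ≥ μ (i+1) - 1`. -/
def QC (μ ν : ℕ → ℕ) : Prop :=
  ∀ i, ν i ≤ μ i + 1 ∧ μ (i + 1) ≤ ν i + 1

/-- B-distinguished: `μ i ≥ ν i - 2` and `ν i ≥ μ (i+1)`. -/
def QB (μ ν : ℕ → ℕ) : Prop :=
  ∀ i, ν i ≤ μ i + 2 ∧ μ (i + 1) ≤ ν i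

/-- Special: `μ i ≥ ν i - 1` and `ν i ≥ μ (i+1)`. -/
def QS (μ ν : ℕ → ℕ) : Prop :=
  ∀ i, ν i ≤ μ i + 1 ∧ μ (i + 1) ≤ ν i

/-- The condition defining `Q_n^{B,2}`: `μ i ≥ ν i - 2`. -/
def QB2 (μ ν : ℕ → ℕ) : Prop := ∀ i, ν i ≤ μ i + 2

/-- For an antitone sequence, the starting index of the run of equal values
containing index `i`. -/
noncomputable def runStart (l : ℕ → ℕ) (i : ℕ) : ℕ := {j | l i < l j}.ncard

/-- The map `Φ̂^C`, pointwise: halve even parts; replace an (even-length)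
maximal run of an odd part `2k+1` with `k, k+1, k, k+1, …`. -/
noncomputable def hphiC (l : ℕ → ℕ) (i : ℕ) : ℕ :=
  if Even (l i) then l i / 2
  else if Even (i - runStart l i) then l i / 2 else l i / 2 + 1

/-- Partial sums of an integer sequence. -/
def zsum (π : ℕ → ℤ) (k : ℕ) : ℤ := ∑ i ∈ Finset.range k, π i

/-- Dominance order on integer sequences. -/
def ZDominates (l π : ℕ → ℤ) : Prop := ∀ k, zsum π k ≤ zsum l k

/-- The interleaved integer sequence `(2ρ₁+1, 2σ₁−1, 2ρ₂+1, 2σ₂−1, …)`. -/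
def interB (ρ σ : ℕ → ℕ) (i : ℕ) : ℤ :=
  if i % 2 = 0 then 2 * (ρ (i / 2) : ℤ) + 1 else 2 * (σ (i / 2) : ℤ) - 1

/-- The map `Φ^B` on integer sequences: replace a consecutive pair `s < t`
by `(s+t)/2, (s+t)/2` (pointwise description). -/
def phiB (π : ℕ → ℤ) : ℕ → ℤ
  | 0 => if π 0 < π 1 then (π 0 + π 1) / 2 else π 0
  | (j + 1) =>
      if π (j + 1) < π (j + 2) then (π (j + 1) + π (j + 2)) / 2
      else if π j < π (j + 1) then (π j + π (j + 1)) / 2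
      else π (j + 1)

/-- `Φ^B` of a bipartition. -/
def PhiB (ρ σ : ℕ → ℕ) : ℕ → ℤ := phiB (interB ρ σ)

/-- Membership in `P^B_{2n+1}` for an integer sequence: nonnegative, weakly
decreasing, summing to `2n+1`, with every (positive) even part of even
multiplicity. -/
def IsPB (n : ℕ) (l : ℕ → ℤ) : Prop :=
  (∀ i, 0 ≤ l i) ∧ (∀ i, l (i + 1) ≤ l i) ∧
  (∃ N, (∀ i, N ≤ i → l i = 0) ∧ zsum l N = 2 * n + 1) ∧
  ∀ a : ℤ, 0 < a → Even a → Even ({i | l i = a}.ncard)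

/-- Membership in `P^B_{2n+1}` for a natural-number partition. -/
def IsPBN (n : ℕ) (l : ℕ → ℕ) : Prop :=
  IsPartition l ∧ IsComposition (2 * n + 1) l ∧
    ∀ a : ℕ, 0 < a → Even a → Even ({i | l i = a}.ncard)

/-- The map `Φ̂^B`, pointwise (0-indexed, so the paper's index `i` is `j+1`):
an odd part `λ_i` becomes `(λ_i + (−1)^i)/2`; a maximal run of an even part
`2k` starting at (0-indexed) position `s` becomes `k, k, …` if `s` is odd
(paper's `i` even) and `k−1, k+1, k−1, k+1, …` if `s` is even (paper's `i`
odd). -/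
noncomputable def hphiB (l : ℕ → ℕ) (j : ℕ) : ℕ :=
  if Odd (l j) then (if Even j then (l j - 1) / 2 else (l j + 1) / 2)
  else
    if Odd (runStart l j) then l j / 2
    else if Even (j - runStart l j) then l j / 2 - 1 else l j / 2 + 1

/-- First component of the special closure `(ρ;σ)°`. -/
def scRho (ρ σ : ℕ → ℕ) : ℕ → ℕ
  | 0 => if ρ 0 + 1 < σ 0 then (ρ 0 + σ 0) / 2 else ρ 0
  | (i + 1) =>
      if ρ (i + 1) + 1 < σ (i + 1) then (ρ (i + 1) + σ (i + 1)) / 2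
      else if σ i < ρ (i + 1) then (σ i + ρ (i + 1)) / 2
      else ρ (i + 1)

/-- Second component of the special closure `(ρ;σ)°`. -/
def scSigma (ρ σ : ℕ → ℕ) (i : ℕ) : ℕ :=
  if ρ i + 1 < σ i then (ρ i + σ i + 1) / 2
  else if σ i < ρ (i + 1) then (σ i + ρ (i + 1) + 1) / 2
  else σ i

/-- First component of the closure `(ρ;σ)~` into `Q_n^{B,2}`. -/
def tRho (ρ σ : ℕ → ℕ) (i : ℕ) : ℕ :=
  if ρ i + 2 < σ i then (ρ i + σ i + 1) / 2 - 1 else ρ i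

/-- Second component of the closure `(ρ;σ)~` into `Q_n^{B,2}`. -/
def tSigma (ρ σ : ℕ → ℕ) (i : ℕ) : ℕ :=
  if ρ i + 2 < σ i then (ρ i + σ i) / 2 + 1 else σ i

/-- First component of the closure `(ρ;σ)^B` into `Q_n^B`. -/
def bRho (ρ σ : ℕ → ℕ) : ℕ → ℕ
  | 0 => if ρ 0 + 2 < σ 0 then (ρ 0 + σ 0 + 1) / 2 - 1 else ρ 0
  | (i + 1) =>
      if ρ (i + 1) + 2 < σ (i + 1) then (ρ (i + 1) + σ (i + 1) + 1) / 2 - 1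
      else if σ i < ρ (i + 1) then (σ i + ρ (i + 1)) / 2
      else ρ (i + 1)

/-- Second component of the closure `(ρ;σ)^B` into `Q_n^B`. -/
def bSigma (ρ σ : ℕ → ℕ) (i : ℕ) : ℕ :=
  if ρ i + 2 < σ i then (ρ i + σ i) / 2 + 1
  else if σ i < ρ (i + 1) then (σ i + ρ (i + 1) + 1) / 2
  else σ i

/-- First component of the closure `(ρ;σ)^C` into `Q_n^C`. -/
def cRho (ρ σ : ℕ → ℕ) : ℕ → ℕ
  | 0 => if ρ 0 + 1 < σ 0 then (ρ 0 + σ 0) / 2 else ρ 0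
  | (i + 1) =>
      if ρ (i + 1) + 1 < σ (i + 1) then (ρ (i + 1) + σ (i + 1)) / 2
      else if σ i + 1 < ρ (i + 1) then (σ i + ρ (i + 1) + 1) / 2
      else ρ (i + 1)

/-- Second component of the closure `(ρ;σ)^C` into `Q_n^C`. -/
def cSigma (ρ σ : ℕ → ℕ) (i : ℕ) : ℕ :=
  if ρ i + 1 < σ i then (ρ i + σ i + 1) / 2
  else if σ i + 1 < ρ (i + 1) then (σ i + ρ (i + 1)) / 2
  else σ i

/-!
Write `S k` for the partial sums of an odd-valued sequence `π` with `π (i + 2) ≤ π i`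
(which keeps the merged pairs disjoint).
Merging a pair `π (k - 1) < π k` into two copies of its mean raises the `k`-th partial sum
from `S k` to `(S (k - 1) + S (k + 1)) / 2`, and otherwise leaves it alone, so the partial sums
of `Φ^B(π)` are `max (S k) ((S (k - 1) + S (k + 1)) / 2)`: monotone in `S`. For `π = interB ρ σ`
we have `S k = 2 · psum (interleave ρ σ) k + k % 2`, so interleaved dominance of bipartitions is
exactly dominance of these partial sums.
-/

lemma zsum_succ (π : ℕ → ℤ) (k : ℕ) : zsum π (k + 1) = zsum π k + π k :=
  Finset.sum_range_succ π k

lemma psum_succ (π : ℕ → ℕ) (k : ℕ) : psum π (k + 1) = psum π k + π k :=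
  Finset.sum_range_succ π k

lemma zsum_phiB_succ {π : ℕ → ℤ} (hodd : ∀ i, π i % 2 = 1) (hq : ∀ i, π (i + 2) ≤ π i)
    (k : ℕ) :
    zsum (phiB π) (k + 1) = max (zsum π (k + 1)) ((zsum π k + zsum π (k + 2)) / 2) := by
  induction k with
  | zero =>
    simp only [zsum, Finset.sum_range_succ, Finset.sum_range_zero, phiB]
    have := hodd 0; have := hodd 1
    split_ifs <;> omega
  | succ k ih =>
    rw [zsum_succ (phiB π), ih]
    simp only [zsum_succ, phiB]
    have := hodd k; have := hodd (k + 1); have := hodd (k + 2); have := hq k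
    split_ifs <;> omega

lemma ZDominates.map_phiB {π π' : ℕ → ℤ} (h : ZDominates π' π)
    (hodd : ∀ i, π i % 2 = 1) (hq : ∀ i, π (i + 2) ≤ π i)
    (hodd' : ∀ i, π' i % 2 = 1) (hq' : ∀ i, π' (i + 2) ≤ π' i) :
    ZDominates (phiB π') (phiB π) := by
  rintro (_ | k)
  · exact le_rfl
  · rw [zsum_phiB_succ hodd hq, zsum_phiB_succ hodd' hq']
    exact max_le_max (h _) (Int.ediv_le_ediv two_pos (add_le_add (h _) (h _)))

lemma interB_emod_two (ρ σ : ℕ → ℕ) (i : ℕ) : interB ρ σ i % 2 = 1 := by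
  unfold interB
  split_ifs <;> omega

lemma interB_add_two_le {ρ σ : ℕ → ℕ} (hρ : IsPartition ρ) (hσ : IsPartition σ) (i : ℕ) :
    interB ρ σ (i + 2) ≤ interB ρ σ i := by
  have hi : (i + 2) / 2 = i / 2 + 1 := by omega
  have := hρ (i / 2); have := hσ (i / 2)
  simp only [interB, Nat.add_mod_right, hi]
  split_ifs <;> omega

lemma zsum_interB (ρ σ : ℕ → ℕ) (k : ℕ) :
    zsum (interB ρ σ) k = 2 * (psum (interleave ρ σ) k : ℤ) + (k % 2 : ℕ) := by
  induction k with
  | zero => simp [zsum, psum]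
  | succ k ih =>
    rw [zsum_succ, psum_succ, ih]
    simp only [interB, interleave]
    split_ifs <;> omega

lemma BiLE.zdominates_interB {ρ σ μ ν : ℕ → ℕ} (h : BiLE ρ σ μ ν) :
    ZDominates (interB μ ν) (interB ρ σ) := fun k => by
  have := h k
  rw [zsum_interB, zsum_interB]
  omega

/-- `Φ^B : Q_n → P^B_{2n+1}` is monotone. -/
theorem phiB_monotone (n : ℕ) (ρ σ μ ν : ℕ → ℕ)
    (h1 : IsBipartition n ρ σ) (h2 : IsBipartition n μ ν)
    (hle : BiLE ρ σ μ ν) :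
    ZDominates (PhiB μ ν) (PhiB ρ σ) := by
  obtain ⟨hρ, hσ, -⟩ := h1
  obtain ⟨hμ, hν, -⟩ := h2
  exact hle.zdominates_interB.map_phiB (interB_emod_two ρ σ) (interB_add_two_le hρ hσ)
    (interB_emod_two μ ν) (interB_add_two_le hμ hν)
end

section
/- Let (ρ;σ) and (μ;ν) be bipartitions of n with ρ + σ = μ + ν (termwise). Then (ρ;σ) ≤ (μ;ν) in the interleaved dominance order if and only if ρ_i ≤ μ_i for all i. -/
open Finset

lemma interleave_two_mul (ρ σ : ℕ → ℕ) (k : ℕ) : interleave ρ σ (2 * k) = ρ k := by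
  simp [interleave]

lemma interleave_two_mul_add_one (ρ σ : ℕ → ℕ) (k : ℕ) :
    interleave ρ σ (2 * k + 1) = σ k := by
  simp [interleave, Nat.add_mod, Nat.add_div]

lemma psum_interleave_two_mul (ρ σ : ℕ → ℕ) (k : ℕ) :
    psum (interleave ρ σ) (2 * k) = psum ρ k + psum σ k := by
  induction k with
  | zero => simp [psum]
  | succ k ih =>
    rw [Nat.mul_succ, psum_succ, psum_succ, interleave_two_mul_add_one, interleave_two_mul,
      ih, psum_succ, psum_succ]
    ring

lemma psum_interleave_two_mul_add_one (ρ σ : ℕ → ℕ) (k : ℕ) :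
    psum (interleave ρ σ) (2 * k + 1) = psum ρ k + psum σ k + ρ k := by
  rw [psum_succ, psum_interleave_two_mul, interleave_two_mul]

lemma biLE_iff {ρ σ μ ν : ℕ → ℕ} :
    BiLE ρ σ μ ν ↔ ∀ k, psum ρ k + psum σ k ≤ psum μ k + psum ν k ∧
      psum ρ k + psum σ k + ρ k ≤ psum μ k + psum ν k + μ k := by
  constructor
  · intro h k
    exact ⟨by simpa only [psum_interleave_two_mul] using h (2 * k),
      by simpa only [psum_interleave_two_mul_add_one] using h (2 * k + 1)⟩
  · intro h k
    obtain ⟨m, rfl | rfl⟩ := Nat.even_or_odd' k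
    · simpa only [psum_interleave_two_mul] using (h m).1
    · simpa only [psum_interleave_two_mul_add_one] using (h m).2

theorem biLE_iff_of_sum_eq_general (ρ σ μ ν : ℕ → ℕ)
    (hsum : ∀ i, ρ i + σ i = μ i + ν i) :
    BiLE ρ σ μ ν ↔ ∀ i, ρ i ≤ μ i := by
  have hpsum : ∀ k, psum ρ k + psum σ k = psum μ k + psum ν k := fun k => by
    simp only [psum, ← sum_add_distrib, hsum]
  simp only [biLE_iff, hpsum, le_refl, true_and, add_le_add_iff_left]

/-- if `ρ + σ = μ + ν` termwise, then `(ρ;σ) ≤ (μ;ν)` in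
interleaved dominance order iff `ρ i ≤ μ i` for all `i`. -/
theorem biLE_iff_of_sum_eq (n : ℕ) (ρ σ μ ν : ℕ → ℕ)
    (h1 : IsBipartition n ρ σ) (h2 : IsBipartition n μ ν)
    (hsum : ∀ i, ρ i + σ i = μ i + ν i) :
    BiLE ρ σ μ ν ↔ ∀ i, ρ i ≤ μ i :=
  biLE_iff_of_sum_eq_general ρ σ μ ν hsum
end

section
/- For any bipartition (ρ;σ) of n, one has ((ρ;σ)~)^B = (ρ;σ)^B, where (ρ;σ)~ = Φ̂-type closure into Q_n^{B,2} (replace ρ_i, σ_i with ⌈(ρ_i+σ_i)/2⌉−1, ⌊(ρ_i+σ_i)/2⌋+1 whenever ρ_i < σ_i − 2) and (·)^B = Φ̂^B ∘ Φ^B is the closure into Q_n^B. -/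
open Finset

/-!
A pair in `Q^{B,2}` admits no replacement of the first kind, so on such a pair `(·)^B` performs
only the replacements `σ_i, ρ_{i+1} ↦ ⌈(σ_i+ρ_{i+1})/2⌉, ⌊(σ_i+ρ_{i+1})/2⌋`. The pair `(ρ;σ)~` lies
in `Q^{B,2}`, and for a bipartition it has a descent `σ_i < ρ_{i+1}` exactly where `(ρ;σ)` has one,
at the same entries: a descent forces `ρ_i ≥ ρ_{i+1} > σ_i ≥ σ_{i+1}`, so neither column `i` nor
column `i+1` is touched by `~`. Since the two kinds of replacement never overlap, both sides agree.
-/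

theorem qb2_tRho_tSigma (ρ σ : ℕ → ℕ) : QB2 (tRho ρ σ) (tSigma ρ σ) := by
  intro i
  unfold tRho tSigma
  split_ifs <;> omega

section Tilde

variable {ρ σ : ℕ → ℕ} {i : ℕ}

theorem tRho_of_le (h : σ i ≤ ρ i + 2) : tRho ρ σ i = ρ i :=
  if_neg h.not_gt

theorem tSigma_of_le (h : σ i ≤ ρ i + 2) : tSigma ρ σ i = σ i :=
  if_neg h.not_gt

theorem tSigma_lt_tRho_succ_iff (hρ : ρ (i + 1) ≤ ρ i) (hσ : σ (i + 1) ≤ σ i) :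
    tSigma ρ σ i < tRho ρ σ (i + 1) ↔ σ i < ρ (i + 1) := by
  unfold tRho tSigma
  split_ifs <;> omega

end Tilde

section QB2

variable {μ ν : ℕ → ℕ}

theorem QB2.bRho_zero (h : QB2 μ ν) : bRho μ ν 0 = μ 0 :=
  if_neg (h 0).not_gt

theorem QB2.bRho_succ (h : QB2 μ ν) (i : ℕ) :
    bRho μ ν (i + 1) = if ν i < μ (i + 1) then (ν i + μ (i + 1)) / 2 else μ (i + 1) :=
  if_neg (h (i + 1)).not_gt

theorem QB2.bSigma (h : QB2 μ ν) (i : ℕ) :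
    bSigma μ ν i = if ν i < μ (i + 1) then (ν i + μ (i + 1) + 1) / 2 else ν i :=
  if_neg (h i).not_gt

end QB2

section Descent

variable {ρ σ : ℕ → ℕ} {i : ℕ}

theorem bRho_succ_eq_ite_tRho (hσ : σ (i + 1) ≤ σ i) :
    bRho ρ σ (i + 1) = if σ i < ρ (i + 1) then (σ i + ρ (i + 1)) / 2 else tRho ρ σ (i + 1) := by
  simp only [bRho, tRho]
  split_ifs <;> omega

theorem bSigma_eq_ite_tSigma (hρ : ρ (i + 1) ≤ ρ i) :
    bSigma ρ σ i = if σ i < ρ (i + 1) then (σ i + ρ (i + 1) + 1) / 2 else tSigma ρ σ i := by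
  unfold bSigma tSigma
  split_ifs <;> omega

end Descent

/-- `((ρ;σ)~)^B = (ρ;σ)^B`. -/
theorem bClosure_tilde (n : ℕ) (ρ σ : ℕ → ℕ) (h : IsBipartition n ρ σ) :
    (∀ i, bRho (tRho ρ σ) (tSigma ρ σ) i = bRho ρ σ i) ∧
    (∀ i, bSigma (tRho ρ σ) (tSigma ρ σ) i = bSigma ρ σ i) := by
  obtain ⟨hρ, hσ, -⟩ := h
  have hQ := qb2_tRho_tSigma ρ σ
  have untouched {i : ℕ} (hlt : σ i < ρ (i + 1)) :
      tSigma ρ σ i = σ i ∧ tRho ρ σ (i + 1) = ρ (i + 1) :=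
    ⟨tSigma_of_le (by linarith [hρ i]), tRho_of_le (by linarith [hσ i])⟩
  refine ⟨?_, fun i => ?_⟩
  · rintro (_ | i)
    · exact hQ.bRho_zero
    rw [hQ.bRho_succ, bRho_succ_eq_ite_tRho (hσ i)]
    simp only [tSigma_lt_tRho_succ_iff (hρ i) (hσ i)]
    split_ifs with hlt
    · rw [(untouched hlt).1, (untouched hlt).2]
    · rfl
  · rw [hQ.bSigma, bSigma_eq_ite_tSigma (hρ i)]
    simp only [tSigma_lt_tRho_succ_iff (hρ i) (hσ i)]
    split_ifs with hlt
    · rw [(untouched hlt).1, (untouched hlt).2]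
    · rfl
end

section
/- Let 𝔽 be a field of characteristic 2, V a 2n-dimensional 𝔽-vector space with a nondegenerate alternating bilinear form ⟨·,·⟩, and for v ∈ V define s(v) ∈ End(V) by s(v)(w) = ⟨v,w⟩ v. Then for any v ∈ V and any x ∈ End(V) satisfying ⟨xw,w⟩ = 0 for all w ∈ V, the endomorphism s(v) + x is nilpotent if and only if x is nilpotent. -/
/-!
Since `B` and the form `(a, b) ↦ B (x a) b` are alternating, `x` is self-adjoint for `B`,
hence `B v (x ^ (2k) v) = B (x ^ k v) (x ^ k v) = 0` and
`B v (x ^ (2k+1) v) = B (x ^ k v) (x (x ^ k v)) = 0`.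
So `s(v)` kills the `x`-cyclic submodule `P` generated by `v` and maps everything into `𝔽 v ⊆ P`.
Therefore `s(v) + x` preserves `P` and induces the same maps as `x` on `P` and on `V ⧸ P`;
an endomorphism is nilpotent iff both induced maps are.
-/

namespace Module.End

variable {R M : Type*} [Ring R] [AddCommGroup M] [Module R M]

theorem isNilpotent_iff_restrict_and_mapQ {f : Module.End R M} {p : Submodule R M}
    (hp : p ≤ p.comap f) :
    IsNilpotent f ↔ IsNilpotent (f.restrict hp) ∧ IsNilpotent (p.mapQ p f hp) := by
  refine ⟨fun hf ↦ ⟨isNilpotent.restrict hp hf, Module.End.IsNilpotent.mapQ hp hf⟩, ?_⟩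
  rintro ⟨⟨b, hb⟩, ⟨a, ha⟩⟩
  refine ⟨b + a, LinearMap.ext fun m ↦ ?_⟩
  have hmem : (f ^ a) m ∈ p := by
    have h := LinearMap.congr_fun ha (Submodule.Quotient.mk m)
    rwa [← Submodule.mapQ_pow, Submodule.mapQ_apply, LinearMap.zero_apply,
      Submodule.Quotient.mk_eq_zero] at h
  have hkill := congr_arg Subtype.val (LinearMap.congr_fun hb ⟨_, hmem⟩)
  rw [pow_restrict] at hkill
  rw [pow_add, mul_apply]
  exact hkill

theorem isNilpotent_add_iff_of_range_le_of_le_ker {f g : Module.End R M} {p : Submodule R M}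
    (hrange : LinearMap.range f ≤ p) (hker : p ≤ LinearMap.ker f) (hg : p ≤ p.comap g) :
    IsNilpotent (f + g) ↔ IsNilpotent g := by
  have hfg : p ≤ p.comap (f + g) := fun m hm ↦
    add_mem (hrange (LinearMap.mem_range_self f m)) (hg hm)
  have hrestrict : (f + g).restrict hfg = g.restrict hg := by
    ext ⟨m, hm⟩
    simp [LinearMap.restrict_apply, LinearMap.mem_ker.mp (hker hm)]
  have hmapQ : p.mapQ p (f + g) hfg = p.mapQ p g hg := by
    refine Submodule.linearMap_qext _ (LinearMap.ext fun m ↦ ?_)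
    simpa [Submodule.Quotient.eq] using hrange (LinearMap.mem_range_self f m)
  rw [isNilpotent_iff_restrict_and_mapQ hfg, isNilpotent_iff_restrict_and_mapQ hg, hrestrict,
    hmapQ]

end Module.End

namespace LinearMap

variable {R M : Type*} [CommRing R] [AddCommGroup M] [Module R M]

theorem IsAdjointPair.pow {B : LinearMap.BilinForm R M} {f g : Module.End R M}
    (h : IsAdjointPair B B f g) (n : ℕ) : IsAdjointPair B B ⇑(f ^ n) ⇑(g ^ n) := by
  induction n with
  | zero => exact isAdjointPair_one
  | succ n ih => rw [pow_succ, pow_succ']; exact ih.mul h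

namespace BilinForm

variable {B : LinearMap.BilinForm R M} {x : Module.End R M}

theorem isSelfAdjoint_of_isAlt (hB : B.IsAlt) (hx : (B ∘ₗ x).IsAlt) : B.IsSelfAdjoint x :=
  fun a b ↦ (hx.neg b a).symm.trans (LinearMap.IsAlt.neg hB (x b) a)

theorem apply_pow_apply_self_eq_zero (hB : B.IsAlt) (hx : (B ∘ₗ x).IsAlt) (v : M) (i : ℕ) :
    B v ((x ^ i) v) = 0 := by
  have hpow := (isSelfAdjoint_of_isAlt hB hx).pow
  obtain ⟨k, rfl | rfl⟩ := Nat.even_or_odd' i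
  · rw [two_mul, pow_add, Module.End.mul_apply, ← hpow k]
    exact hB _
  · rw [show 2 * k + 1 = k + (k + 1) by ring, pow_add, Module.End.mul_apply, ← hpow k, pow_succ',
      Module.End.mul_apply, ← isSelfAdjoint_of_isAlt hB hx]
    exact hx _

end BilinForm

end LinearMap

theorem Submodule.span_range_pow_apply_le_comap {R M : Type*} [Semiring R] [AddCommMonoid M]
    [Module R M] (x : Module.End R M) (v : M) :
    span R (Set.range fun i : ℕ ↦ (x ^ i) v) ≤
      (span R (Set.range fun i : ℕ ↦ (x ^ i) v)).comap x := by
  rw [← map_le_iff_le_comap, map_span_le]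
  rintro _ ⟨i, rfl⟩
  exact subset_span ⟨i + 1, by simp only [pow_succ', Module.End.mul_apply]⟩

theorem nilpotent_add_sv_iff_general (𝔽 : Type*) [Field 𝔽]
    (V : Type*) [AddCommGroup V] [Module 𝔽 V]
    (B : LinearMap.BilinForm 𝔽 V)
    (halt : ∀ v : V, B v v = 0)
    (v : V) (x : Module.End 𝔽 V) (hx : ∀ w : V, B (x w) w = 0) :
    IsNilpotent ((LinearMap.toSpanSingleton 𝔽 V v).comp (B v) + x) ↔
      IsNilpotent x := by
  set P := Submodule.span 𝔽 (Set.range fun i : ℕ ↦ (x ^ i) v)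
  have hv : v ∈ P := Submodule.subset_span ⟨0, by simp⟩
  refine Module.End.isNilpotent_add_iff_of_range_le_of_le_ker ?_ ?_
    (Submodule.span_range_pow_apply_le_comap x v)
  · rintro _ ⟨w, rfl⟩
    exact P.smul_mem (B v w) hv
  · rw [Submodule.span_le]
    rintro _ ⟨i, rfl⟩
    simp [LinearMap.BilinForm.apply_pow_apply_self_eq_zero halt hx v i]

/-- Kato: let `𝔽` be a field of characteristic 2, `V` a
`2n`-dimensional `𝔽`-vector space with a nondegenerate alternating bilinear
form `B`, and for `v ∈ V` let `s v : End V` be `w ↦ B v w • v`.  Then for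
`v ∈ V` and `x ∈ End V` with `B (x w) w = 0` for all `w`, the endomorphism
`s v + x` is nilpotent iff `x` is nilpotent. -/
theorem nilpotent_add_sv_iff (𝔽 : Type*) [Field 𝔽] [CharP 𝔽 2]
    (V : Type*) [AddCommGroup V] [Module 𝔽 V] [FiniteDimensional 𝔽 V]
    (n : ℕ) (hdim : Module.finrank 𝔽 V = 2 * n)
    (B : LinearMap.BilinForm 𝔽 V) (hB : B.Nondegenerate)
    (halt : ∀ v : V, B v v = 0)
    (v : V) (x : Module.End 𝔽 V) (hx : ∀ w : V, B (x w) w = 0) :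
    IsNilpotent ((LinearMap.toSpanSingleton 𝔽 V v).comp (B v) + x) ↔
      IsNilpotent x :=
  nilpotent_add_sv_iff_general 𝔽 V B halt v x hx
end
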